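/- arXiv:2507.04565 — 8 statements merged into one kernel-verified Lean document; each statement's English description precedes it below -/
import Mathlib

section
/- Let n ≥ 3 and let A_i, B_i be the n×n bonded Burau matrices (A_i has the block [[1-t,t],[1,0]] at rows/columns i,i+1 and identity elsewhere; B_i has the block [[1-tz,tz],[z,1-z]] at rows/columns i,i+1 and identity elsewhere). Then for 1 ≤ i ≤ n-2, A_{i+1} A_i B_{i+1} = B_i A_{i+1} A_i. -/
/-- The ground ring `ℤ[t,t⁻¹,z]`: polynomials in `z` over Laurent polynomials in `t`. -/
noncomputable abbrev R : Type := Polynomial (LaurentPolynomial ℤ)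

/-- The Laurent variable `t`. -/
noncomputable def t : R := Polynomial.C (LaurentPolynomial.T 1)

/-- The polynomial variable `z`. -/
noncomputable def z : R := Polynomial.X

/-- The `n × n` unreduced Burau matrix of the braid generator `σ_i` (1-based index `i`):
identity except for the block `[[1-t, t],[1, 0]]` at rows/columns `i, i+1`. -/
noncomputable def burauA (n i : ℕ) : Matrix (Fin n) (Fin n) R :=
  Matrix.of fun p q =>
    if (p : ℕ) + 1 = i ∧ (q : ℕ) + 1 = i then 1 - t
    else if (p : ℕ) + 1 = i ∧ (q : ℕ) = i then t
    else if (p : ℕ) = i ∧ (q : ℕ) + 1 = i then 1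
    else if (p : ℕ) = i ∧ (q : ℕ) = i then 0
    else if p = q then 1 else 0

/-- The `n × n` bonded Burau matrix of the bond generator `b_i` (1-based index `i`):
identity except for the block `[[1-tz, tz],[z, 1-z]]` at rows/columns `i, i+1`. -/
noncomputable def burauB (n i : ℕ) : Matrix (Fin n) (Fin n) R :=
  Matrix.of fun p q =>
    if (p : ℕ) + 1 = i ∧ (q : ℕ) + 1 = i then 1 - t * z
    else if (p : ℕ) + 1 = i ∧ (q : ℕ) = i then t * z
    else if (p : ℕ) = i ∧ (q : ℕ) + 1 = i then z
    else if (p : ℕ) = i ∧ (q : ℕ) = i then 1 - z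
    else if p = q then 1 else 0

/-! All four matrices are the identity outside rows and columns `i, i + 1, i + 2`, where they
are the `3 × 3` matrices of the case `n = 3`, `i = 1`. Placing a block on a fixed set of rows
and columns and filling the rest with the identity is multiplicative, so the relation reduces to
that case, a finite computation. -/

namespace Matrix

variable {ι κ α : Type*} [Fintype ι] [DecidableEq κ]

def extendByOne [Zero α] [One α] (f : ι ↪ κ) (M : Matrix ι ι α) : Matrix κ κ α :=
  of fun p q =>
    if h : p ∈ Set.range f ∧ q ∈ Set.range f then
      M (f.invOfMemRange ⟨p, h.1⟩) (f.invOfMemRange ⟨q, h.2⟩)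
    else (1 : Matrix κ κ α) p q

section Apply

variable [Zero α] [One α]

@[simp]
theorem extendByOne_apply_apply (f : ι ↪ κ) (M : Matrix ι ι α) (a b : ι) :
    extendByOne f M (f a) (f b) = M a b := by
  simp [extendByOne]

theorem extendByOne_apply_of_notMem_left (f : ι ↪ κ) (M : Matrix ι ι α) {p : κ}
    (hp : p ∉ Set.range f) (q : κ) : extendByOne f M p q = (1 : Matrix κ κ α) p q := by
  rw [extendByOne, of_apply, dif_neg fun h => hp h.1]

theorem extendByOne_apply_of_notMem_right (f : ι ↪ κ) (M : Matrix ι ι α) (p : κ) {q : κ}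
    (hq : q ∉ Set.range f) : extendByOne f M p q = (1 : Matrix κ κ α) p q := by
  rw [extendByOne, of_apply, dif_neg fun h => hq h.2]

theorem eq_extendByOne {f : ι ↪ κ} {M : Matrix ι ι α} {N : Matrix κ κ α}
    (hin : ∀ a b, N (f a) (f b) = M a b)
    (hout : ∀ p q, p ∉ Set.range f ∨ q ∉ Set.range f → N p q = (1 : Matrix κ κ α) p q) :
    N = extendByOne f M := by
  ext p q
  by_cases hp : p ∈ Set.range f
  · by_cases hq : q ∈ Set.range f
    · obtain ⟨a, rfl⟩ := hp
      obtain ⟨b, rfl⟩ := hq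
      rw [hin, extendByOne_apply_apply]
    · rw [hout p q (Or.inr hq), extendByOne_apply_of_notMem_right f M p hq]
  · rw [hout p q (Or.inl hp), extendByOne_apply_of_notMem_left f M hp]

end Apply

theorem extendByOne_mul [Fintype κ] [NonAssocSemiring α] (f : ι ↪ κ) (M N : Matrix ι ι α) :
    extendByOne f (M * N) = extendByOne f M * extendByOne f N := by
  ext p q
  by_cases hp : p ∈ Set.range f
  · obtain ⟨a, rfl⟩ := hp
    -- only the columns in `range f` of row `f a` of `extendByOne f M` are nonzero
    have hrow : (extendByOne f M * extendByOne f N) (f a) q =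
        ∑ b, M a b * extendByOne f N (f b) q := by
      rw [mul_apply, ← Finset.sum_subset (Finset.subset_univ (Finset.univ.map f)), Finset.sum_map]
      · simp
      · intro r _ hr
        have hr : r ∉ Set.range f := by simpa using hr
        rw [extendByOne_apply_of_notMem_right f M _ hr, one_apply_ne, zero_mul]
        rintro rfl
        exact hr ⟨a, rfl⟩
    rw [hrow]
    by_cases hq : q ∈ Set.range f
    · obtain ⟨c, rfl⟩ := hq
      simp [mul_apply]
    · have hq' : ∀ b, f b ≠ q := fun b hb => hq ⟨b, hb⟩
      simp [extendByOne_apply_of_notMem_right _ _ _ hq, one_apply_ne (hq' _)]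
  · simp [mul_apply, extendByOne_apply_of_notMem_left _ _ hp, one_apply]

end Matrix

def windowEmb {k n : ℕ} (j : ℕ) (h : j + k ≤ n) : Fin k ↪ Fin n :=
  (Fin.natAddEmb j).trans (Fin.castLEEmb h)

@[simp]
theorem val_windowEmb {k n j : ℕ} (h : j + k ≤ n) (a : Fin k) :
    (windowEmb j h a : ℕ) = j + a :=
  rfl

theorem mem_range_windowEmb {k n j : ℕ} (h : j + k ≤ n) (p : Fin n) :
    p ∈ Set.range (windowEmb j h) ↔ j ≤ p ∧ (p : ℕ) < j + k := by
  constructor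
  · rintro ⟨a, rfl⟩
    simp
  · rintro ⟨hjp, hpk⟩
    exact ⟨⟨p - j, by omega⟩, Fin.ext (by simp; omega)⟩

def burauPattern {α : Type*} [Zero α] [One α] (n i : ℕ) (a b c d : α) :
    Matrix (Fin n) (Fin n) α :=
  Matrix.of fun p q =>
    if (p : ℕ) + 1 = i ∧ (q : ℕ) + 1 = i then a
    else if (p : ℕ) + 1 = i ∧ (q : ℕ) = i then b
    else if (p : ℕ) = i ∧ (q : ℕ) + 1 = i then c
    else if (p : ℕ) = i ∧ (q : ℕ) = i then d
    else if p = q then 1 else 0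

theorem burauPattern_eq_extendByOne {α : Type*} [Zero α] [One α] {n j k i : ℕ}
    (h : j + k ≤ n) (hi : 1 ≤ i) (hik : i < k) (a b c d : α) :
    burauPattern n (j + i) a b c d =
      Matrix.extendByOne (windowEmb j h) (burauPattern k i a b c d) := by
  apply Matrix.eq_extendByOne
  · intro x y
    simp only [burauPattern, Matrix.of_apply, val_windowEmb, (windowEmb j h).injective.eq_iff]
    split_ifs <;> first | rfl | omega
  · intro p q hpq
    simp only [mem_range_windowEmb] at hpq
    simp only [burauPattern, Matrix.of_apply, Matrix.one_apply]
    split_ifs <;> first | rfl | omega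

theorem burauA_eq_extendByOne {n j k i : ℕ} (h : j + k ≤ n) (hi : 1 ≤ i) (hik : i < k) :
    burauA n (j + i) = Matrix.extendByOne (windowEmb j h) (burauA k i) :=
  burauPattern_eq_extendByOne h hi hik _ _ _ _

theorem burauB_eq_extendByOne {n j k i : ℕ} (h : j + k ≤ n) (hi : 1 ≤ i) (hik : i < k) :
    burauB n (j + i) = Matrix.extendByOne (windowEmb j h) (burauB k i) :=
  burauPattern_eq_extendByOne h hi hik _ _ _ _

theorem burau_mixed_M3_three :
    burauA 3 2 * burauA 3 1 * burauB 3 2 = burauB 3 1 * (burauA 3 2 * burauA 3 1) := by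
  refine Matrix.ext fun a b => ?_
  fin_cases a <;> fin_cases b <;>
    simp [burauA, burauB, Matrix.mul_apply, Fin.sum_univ_three] <;> ring

theorem burau_mixed_M3_general (n i : ℕ) (hi1 : 1 ≤ i) (hi2 : i ≤ n - 2) :
    burauA n (i + 1) * burauA n i * burauB n (i + 1) =
      burauB n i * (burauA n (i + 1) * burauA n i) := by
  obtain ⟨j, rfl⟩ : ∃ j, i = j + 1 := ⟨i - 1, by omega⟩
  have h : j + 3 ≤ n := by omega
  rw [show j + 1 + 1 = j + 2 from rfl,
    burauA_eq_extendByOne h (i := 1) (by norm_num) (by norm_num),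
    burauA_eq_extendByOne h (i := 2) (by norm_num) (by norm_num),
    burauB_eq_extendByOne h (i := 1) (by norm_num) (by norm_num),
    burauB_eq_extendByOne h (i := 2) (by norm_num) (by norm_num),
    ← Matrix.extendByOne_mul, ← Matrix.extendByOne_mul, ← Matrix.extendByOne_mul,
    burau_mixed_M3_three]

/-- mixed relation (M3): `A_{i+1} A_i B_{i+1} = B_i A_{i+1} A_i`
for the `n × n` bonded Burau matrices, `n ≥ 3`, `1 ≤ i ≤ n-2`. -/
theorem burau_mixed_M3 (n i : ℕ) (hn : 3 ≤ n) (hi1 : 1 ≤ i) (hi2 : i ≤ n - 2) :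
    burauA n (i + 1) * burauA n i * burauB n (i + 1) =
      burauB n i * (burauA n (i + 1) * burauA n i) :=
  burau_mixed_M3_general n i hi1 hi2
end

section
/- Let n ≥ 3 and let A_i, B_i be the n×n bonded Burau matrices as above. Then for 1 ≤ i ≤ n-2, A_i A_{i+1} B_i = B_{i+1} A_i A_{i+1}. -/
namespace Matrix

variable {ι α : Type*} [DecidableEq ι]

def blockUpdate [Ring α] (a b : ι) (p q r s : α) : Matrix ι ι α :=
  1 + (p - 1) • single a a 1 + q • single a b 1 + r • single b a 1 + (s - 1) • single b b 1

theorem blockUpdate_apply [Ring α] {a b : ι} (hab : a ≠ b) (p q r s : α) (x y : ι) :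
    blockUpdate a b p q r s x y =
      if x = a ∧ y = a then p else if x = a ∧ y = b then q
      else if x = b ∧ y = a then r else if x = b ∧ y = b then s
      else if x = y then 1 else 0 := by
  obtain hx | hx | ⟨hxa, hxb⟩ : x = a ∨ x = b ∨ (x ≠ a ∧ x ≠ b) := (by tauto) <;>
  obtain hy | hy | ⟨hya, hyb⟩ : y = a ∨ y = b ∨ (y ≠ a ∧ y ≠ b) := (by tauto) <;>
    simp [blockUpdate, one_apply, Ne.symm, *]

theorem blockUpdate_burau_mul_burau_mul_bond [Fintype ι] [CommRing α] {a b c : ι}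
    (hab : a ≠ b) (hbc : b ≠ c) (hac : a ≠ c) (t z : α) :
    blockUpdate a b (1 - t) t 1 0 * blockUpdate b c (1 - t) t 1 0 *
        blockUpdate a b (1 - t * z) (t * z) z (1 - z) =
      blockUpdate b c (1 - t * z) (t * z) z (1 - z) *
        (blockUpdate a b (1 - t) t 1 0 * blockUpdate b c (1 - t) t 1 0) := by
  simp only [blockUpdate, add_mul, mul_add, one_mul, mul_one, smul_mul_assoc, mul_smul_comm,
    single_mul_single_same, single_mul_single_of_ne, hab, hab.symm, hbc, hbc.symm, hac, hac.symm,
    ne_eq, not_false_eq_true, smul_zero, add_zero]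
  module

end Matrix

open Matrix

theorem burauA_eq_blockUpdate {n i : ℕ} (a b : Fin n) (ha : (a : ℕ) + 1 = i) (hb : (b : ℕ) = i) :
    burauA n i = blockUpdate a b (1 - t) t 1 0 := by
  have hab : a ≠ b := by rw [ne_eq, Fin.ext_iff]; omega
  ext x y : 1
  simp only [blockUpdate_apply hab, burauA, of_apply, Fin.ext_iff]
  split_ifs <;> first | rfl | omega

theorem burauB_eq_blockUpdate {n i : ℕ} (a b : Fin n) (ha : (a : ℕ) + 1 = i) (hb : (b : ℕ) = i) :
    burauB n i = blockUpdate a b (1 - t * z) (t * z) z (1 - z) := by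
  have hab : a ≠ b := by rw [ne_eq, Fin.ext_iff]; omega
  ext x y : 1
  simp only [blockUpdate_apply hab, burauB, of_apply, Fin.ext_iff]
  split_ifs <;> first | rfl | omega

theorem burau_mixed_M4_general (n i : ℕ) (hi1 : 1 ≤ i) (hi2 : i ≤ n - 2) :
    burauA n i * burauA n (i + 1) * burauB n i =
      burauB n (i + 1) * (burauA n i * burauA n (i + 1)) := by
  let a : Fin n := ⟨i - 1, by omega⟩
  let b : Fin n := ⟨i, by omega⟩
  let c : Fin n := ⟨i + 1, by omega⟩
  have ha : (a : ℕ) + 1 = i := Nat.sub_add_cancel hi1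
  rw [burauA_eq_blockUpdate a b ha rfl, burauA_eq_blockUpdate b c rfl rfl,
    burauB_eq_blockUpdate a b ha rfl, burauB_eq_blockUpdate b c rfl rfl]
  exact blockUpdate_burau_mul_burau_mul_bond (by simp [a, b, Fin.ext_iff]; omega)
    (by simp [b, c, Fin.ext_iff]) (by simp [a, c, Fin.ext_iff]) t z

/-- mixed relation (M4): `A_i A_{i+1} B_i = B_{i+1} A_i A_{i+1}`
for the `n × n` bonded Burau matrices, `n ≥ 3`, `1 ≤ i ≤ n-2`. -/
theorem burau_mixed_M4 (n i : ℕ) (hn : 3 ≤ n) (hi1 : 1 ≤ i) (hi2 : i ≤ n - 2) :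
    burauA n i * burauA n (i + 1) * burauB n i =
      burauB n (i + 1) * (burauA n i * burauA n (i + 1)) :=
  burau_mixed_M4_general n i hi1 hi2
end

section
/- Let n ≥ 3, let B_i be the n×n bonded Burau matrix of b_i, and let C be the n×n upper-triangular matrix of all ones on and above the diagonal. Then B_i C = C · [[B_i', 0],[*_i, 1]], where B_i' is the (n-1)×(n-1) reduced bonded Burau matrix and *_i is the zero row vector for i < n-1 and (0,...,0,z) for i = n-1. -/
/-- The all-ones upper triangular `n × n` matrix `C`. -/
noncomputable def Cmat (n : ℕ) : Matrix (Fin n) (Fin n) R :=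
  Matrix.of fun p q => if p ≤ q then 1 else 0

/-- The `m × m` reduced Burau matrix `A_i'` (1-based `i`, `m = n - 1`): identity except
entry `(i,i) = -t`, entry `(i-1,i) = t`, entry `(i+1,i) = 1`. -/
noncomputable def redA (m i : ℕ) : Matrix (Fin m) (Fin m) R :=
  Matrix.of fun p q =>
    if (p : ℕ) + 1 = i ∧ (q : ℕ) + 1 = i then -t
    else if (p : ℕ) + 2 = i ∧ (q : ℕ) + 1 = i then t
    else if (p : ℕ) = i ∧ (q : ℕ) + 1 = i then 1
    else if p = q then 1 else 0

/-- The `m × m` reduced bonded Burau matrix `B_i'` (1-based `i`): identity except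
entry `(i,i) = 1-z-tz`, entry `(i-1,i) = tz`, entry `(i+1,i) = z`. -/
noncomputable def redB (m i : ℕ) : Matrix (Fin m) (Fin m) R :=
  Matrix.of fun p q =>
    if (p : ℕ) + 1 = i ∧ (q : ℕ) + 1 = i then 1 - z - t * z
    else if (p : ℕ) + 2 = i ∧ (q : ℕ) + 1 = i then t * z
    else if (p : ℕ) = i ∧ (q : ℕ) + 1 = i then z
    else if p = q then 1 else 0

/-- The `n × n` block matrix `[[B_i', 0],[*_i, 1]]`, where `B_i'` is the reduced bonded
Burau matrix and the row `*_i` is zero for `i < n-1` and `(0,…,0,z)` for `i = n-1`. -/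
noncomputable def blockB (n i : ℕ) : Matrix (Fin n) (Fin n) R :=
  Matrix.of fun p q =>
    if hp : (p : ℕ) = n - 1 then
      (if (q : ℕ) = n - 1 then 1
       else if i = n - 1 ∧ (q : ℕ) + 2 = n then z else 0)
    else if hq : (q : ℕ) = n - 1 then 0
    else redB (n - 1) i ⟨p, by have := p.isLt; omega⟩ ⟨q, by have := q.isLt; omega⟩

set_option maxHeartbeats 1600000 in
/-- for `n ≥ 3` and `1 ≤ i ≤ n-1`, the bonded Burau matrix `B_i` satisfies
`B_i C = C · [[B_i', 0],[*_i, 1]]` with `B_i'` the reduced bonded Burau matrix. -/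
theorem bonded_burau_reduction (n i : ℕ) (hn : 3 ≤ n) (hi1 : 1 ≤ i) (hi2 : i ≤ n - 1) :
    burauB n i * Cmat n = Cmat n * blockB n i := by
  refine Matrix.ext fun p q => ?_
  rw [Matrix.mul_apply, Matrix.mul_apply]
  have hCle : ∀ a b : Fin n, Cmat n a b = if (a:ℕ) ≤ (b:ℕ) then (1:R) else 0 := by
    intro a b; simp only [Cmat, Matrix.of_apply, Fin.le_def]
  have hE :
      (∑ k, burauB n i p k * Cmat n k q) =
        (if (q:ℕ)+1 = i then
          (if (p:ℕ)+1 = i then 1 - t*z else if (p:ℕ) = i then z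
            else if (p:ℕ) ≤ (q:ℕ) then 1 else 0)
        else if (p:ℕ) ≤ (q:ℕ) then 1 else 0) := by
    rcases eq_or_ne ((p:ℕ)+1) i with hp | hp
    · have h1 : (p:ℕ)+1 < n := by omega
      have hrow : ∀ k : Fin n, burauB n i p k =
          (if k = p then (1-t*z) else 0) + (if k = (⟨(p:ℕ)+1, h1⟩ : Fin n) then t*z else 0) := by
        intro k
        simp only [burauB, Matrix.of_apply, Fin.ext_iff]
        split_ifs <;> first | rfl | (exfalso; omega) | ring
      calc (∑ k, burauB n i p k * Cmat n k q)
          = ∑ k : Fin n, ((if k = p then (1-t*z) else 0)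
              + (if k = (⟨(p:ℕ)+1, h1⟩ : Fin n) then t*z else 0)) * Cmat n k q :=
            Finset.sum_congr rfl fun k _ => by rw [hrow]
        _ = (1-t*z) * Cmat n p q + t*z * Cmat n ⟨(p:ℕ)+1, h1⟩ q := by
            simp [add_mul, ite_mul, Finset.sum_add_distrib]
        _ = _ := by
            rw [hCle, hCle]
            simp only [Fin.val_mk]
            split_ifs <;> first | rfl | (exfalso; omega) | ring
    · rcases eq_or_ne ((p:ℕ)) i with hp2 | hp2
      · have h1 : i - 1 < n := by omega
        have hrow : ∀ k : Fin n, burauB n i p k =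
            (if k = (⟨i-1, h1⟩ : Fin n) then z else 0) + (if k = p then (1-z) else 0) := by
          intro k
          simp only [burauB, Matrix.of_apply, Fin.ext_iff]
          split_ifs <;> first | rfl | (exfalso; omega) | ring
        calc (∑ k, burauB n i p k * Cmat n k q)
            = ∑ k : Fin n, ((if k = (⟨i-1, h1⟩ : Fin n) then z else 0)
                + (if k = p then (1-z) else 0)) * Cmat n k q :=
              Finset.sum_congr rfl fun k _ => by rw [hrow]
          _ = z * Cmat n ⟨i-1, h1⟩ q + (1-z) * Cmat n p q := by
              simp [add_mul, ite_mul, Finset.sum_add_distrib]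
          _ = _ := by
              rw [hCle, hCle]
              simp only [Fin.val_mk]
              split_ifs <;> first | rfl | (exfalso; omega) | ring
      · have hrow : ∀ k : Fin n, burauB n i p k = (if k = p then 1 else 0) := by
          intro k
          simp only [burauB, Matrix.of_apply, Fin.ext_iff]
          split_ifs <;> first | rfl | (exfalso; omega) | ring
        calc (∑ k, burauB n i p k * Cmat n k q)
            = ∑ k : Fin n, (if k = p then (1:R) else 0) * Cmat n k q :=
              Finset.sum_congr rfl fun k _ => by rw [hrow]
          _ = Cmat n p q := by simp [ite_mul]
          _ = _ := by
              rw [hCle]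
              split_ifs <;> first | rfl | (exfalso; omega) | ring
  rw [hE]
  -- now the right-hand side
  rcases eq_or_ne ((q:ℕ)) (n-1) with hq | hq
  · have h1 : n - 1 < n := by omega
    have hcol : ∀ k : Fin n, blockB n i k q = (if k = (⟨n-1, h1⟩ : Fin n) then 1 else 0) := by
      intro k
      by_cases hk : (k:ℕ) = n - 1
      · simp only [blockB, Matrix.of_apply, dif_pos hk, if_pos hq, Fin.ext_iff, Fin.val_mk]
        rw [if_pos hk]
      · simp only [blockB, Matrix.of_apply, dif_neg hk, dif_pos hq, Fin.ext_iff, Fin.val_mk]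
        rw [if_neg hk]
    calc (if (q:ℕ)+1 = i then
          (if (p:ℕ)+1 = i then 1 - t*z else if (p:ℕ) = i then z
            else if (p:ℕ) ≤ (q:ℕ) then 1 else 0)
        else if (p:ℕ) ≤ (q:ℕ) then (1:R) else 0)
        = Cmat n p ⟨n-1, h1⟩ := by
          rw [hCle]
          simp only [Fin.val_mk]
          split_ifs <;> first | rfl | (exfalso; omega) | ring
      _ = ∑ k : Fin n, Cmat n p k * (if k = (⟨n-1, h1⟩ : Fin n) then (1:R) else 0) := by
          simp [mul_ite]
      _ = ∑ k, Cmat n p k * blockB n i k q :=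
          Finset.sum_congr rfl fun k _ => by rw [hcol]
  · rcases eq_or_ne ((q:ℕ)+1) i with hq2 | hq2
    · rcases eq_or_ne i 1 with hi | hi
      · -- i = 1, q = 0 : column has 1-z-tz at row 0, z at row 1
        have h0 : (0:ℕ) < n := by omega
        have h1 : (1:ℕ) < n := by omega
        have hcol : ∀ k : Fin n, blockB n i k q =
            (if k = (⟨0, h0⟩ : Fin n) then 1-z-t*z else 0)
              + (if k = (⟨1, h1⟩ : Fin n) then z else 0) := by
          intro k
          by_cases hk : (k:ℕ) = n - 1
          · simp only [blockB, Matrix.of_apply, dif_pos hk, Fin.ext_iff, Fin.val_mk]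
            rw [if_neg hq]
            split_ifs <;> first | rfl | (exfalso; omega) | ring
          · simp only [blockB, Matrix.of_apply, dif_neg hk, dif_neg hq, redB, Fin.ext_iff,
              Fin.val_mk]
            split_ifs <;> first | rfl | (exfalso; omega) | ring
        calc (if (q:ℕ)+1 = i then
              (if (p:ℕ)+1 = i then 1 - t*z else if (p:ℕ) = i then z
                else if (p:ℕ) ≤ (q:ℕ) then 1 else 0)
            else if (p:ℕ) ≤ (q:ℕ) then (1:R) else 0)
            = Cmat n p ⟨0, h0⟩ * (1-z-t*z) + Cmat n p ⟨1, h1⟩ * z := by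
              rw [hCle, hCle]
              simp only [Fin.val_mk]
              split_ifs <;> first | rfl | (exfalso; omega) | ring
          _ = ∑ k : Fin n, Cmat n p k * ((if k = (⟨0, h0⟩ : Fin n) then 1-z-t*z else 0)
                + (if k = (⟨1, h1⟩ : Fin n) then z else 0)) := by
              simp [mul_add, mul_ite, Finset.sum_add_distrib]
          _ = ∑ k, Cmat n p k * blockB n i k q :=
              Finset.sum_congr rfl fun k _ => by rw [hcol]
      · -- i ≥ 2 : column has tz at row i-2, 1-z-tz at row i-1, z at row i
        have h0 : i - 2 < n := by omega
        have h1 : i - 1 < n := by omega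
        have h2 : i < n := by omega
        have hcol : ∀ k : Fin n, blockB n i k q =
            (if k = (⟨i-2, h0⟩ : Fin n) then t*z else 0)
              + (if k = (⟨i-1, h1⟩ : Fin n) then 1-z-t*z else 0)
              + (if k = (⟨i, h2⟩ : Fin n) then z else 0) := by
          intro k
          by_cases hk : (k:ℕ) = n - 1
          · simp only [blockB, Matrix.of_apply, dif_pos hk, Fin.ext_iff, Fin.val_mk]
            rw [if_neg hq]
            split_ifs <;> first | rfl | (exfalso; omega) | ring
          · simp only [blockB, Matrix.of_apply, dif_neg hk, dif_neg hq, redB, Fin.ext_iff,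
              Fin.val_mk]
            split_ifs <;> first | rfl | (exfalso; omega) | ring
        calc (if (q:ℕ)+1 = i then
              (if (p:ℕ)+1 = i then 1 - t*z else if (p:ℕ) = i then z
                else if (p:ℕ) ≤ (q:ℕ) then 1 else 0)
            else if (p:ℕ) ≤ (q:ℕ) then (1:R) else 0)
            = Cmat n p ⟨i-2, h0⟩ * (t*z) + Cmat n p ⟨i-1, h1⟩ * (1-z-t*z)
                + Cmat n p ⟨i, h2⟩ * z := by
              rw [hCle, hCle, hCle]
              simp only [Fin.val_mk]
              split_ifs <;> first | rfl | (exfalso; omega) | ring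
          _ = ∑ k : Fin n, Cmat n p k * ((if k = (⟨i-2, h0⟩ : Fin n) then t*z else 0)
                + (if k = (⟨i-1, h1⟩ : Fin n) then 1-z-t*z else 0)
                + (if k = (⟨i, h2⟩ : Fin n) then z else 0)) := by
              simp [mul_add, mul_ite, Finset.sum_add_distrib]
          _ = ∑ k, Cmat n p k * blockB n i k q :=
              Finset.sum_congr rfl fun k _ => by rw [hcol]
    · -- generic column: e_q
      have hcol : ∀ k : Fin n, blockB n i k q = (if k = q then 1 else 0) := by
        intro k
        by_cases hk : (k:ℕ) = n - 1
        · simp only [blockB, Matrix.of_apply, dif_pos hk, Fin.ext_iff]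
          rw [if_neg hq]
          split_ifs <;> first | rfl | (exfalso; omega) | ring
        · simp only [blockB, Matrix.of_apply, dif_neg hk, dif_neg hq, redB, Fin.ext_iff,
            Fin.val_mk]
          split_ifs <;> first | rfl | (exfalso; omega) | ring
      calc (if (q:ℕ)+1 = i then
            (if (p:ℕ)+1 = i then 1 - t*z else if (p:ℕ) = i then z
              else if (p:ℕ) ≤ (q:ℕ) then 1 else 0)
          else if (p:ℕ) ≤ (q:ℕ) then (1:R) else 0)
          = Cmat n p q := by
            rw [hCle]
            split_ifs <;> first | rfl | (exfalso; omega) | ring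
        _ = ∑ k : Fin n, Cmat n p k * (if k = q then (1:R) else 0) := by
            simp [mul_ite]
        _ = ∑ k, Cmat n p k * blockB n i k q :=
            Finset.sum_congr rfl fun k _ => by rw [hcol]
end

section
/- The reduced bonded Burau representation on 2 strands is faithful: the monoid homomorphism from the free monoid on {σ, σ⁻¹, b} modulo the relations of M₂ to the multiplicative monoid of ℤ[t,t⁻¹,z] sending σ ↦ -t, σ⁻¹ ↦ -t⁻¹, b ↦ 1 - z - tz is injective. Concretely: if (-t)^k · (1-z-tz)^m = (-t)^{k'} · (1-z-tz)^{m'} in ℤ[t,t⁻¹,z] with k,k' ∈ ℤ and m,m' ∈ ℕ, then k = k' and m = m'. -/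
/-- The unit `t` of `R = ℤ[t,t⁻¹,z]`. -/
noncomputable def tUnit : Rˣ :=
  Units.map (Polynomial.C : LaurentPolynomial ℤ →+* R).toMonoidHom
    (LaurentPolynomial.isUnit_T (R := ℤ) 1).unit

open LaurentPolynomial Polynomial

private noncomputable def uT : (LaurentPolynomial ℤ)ˣ := (LaurentPolynomial.isUnit_T (R := ℤ) 1).unit

private lemma T_inj : Function.Injective (LaurentPolynomial.T (R := ℤ)) := by
  intro a b h
  have := congrArg LaurentPolynomial.degree h
  rw [degree_T, degree_T] at this
  exact_mod_cast this

private lemma uT_zpow_val : ∀ n : ℤ, (((uT ^ n : (LaurentPolynomial ℤ)ˣ)) : LaurentPolynomial ℤ) = T n := by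
  have hpow : ∀ j : ℕ, (((uT ^ j : (LaurentPolynomial ℤ)ˣ)) : LaurentPolynomial ℤ) = T j := by
    intro j
    rw [Units.val_pow_eq_pow_val]
    have : (uT : LaurentPolynomial ℤ) = T 1 := rfl
    rw [this, T_pow]
    norm_num
  intro n
  cases n with
  | ofNat j => simpa using hpow j
  | negSucc j =>
    rw [zpow_negSucc]
    have h1 : ((((uT ^ (j+1))⁻¹ : (LaurentPolynomial ℤ)ˣ)) : LaurentPolynomial ℤ) * T ((j : ℤ)+1) = 1 := by
      have := hpow (j+1)
      push_cast at this
      rw [← this]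
      exact Units.inv_mul _
    have h2 : (T (Int.negSucc j) : LaurentPolynomial ℤ) * T ((j : ℤ)+1) = 1 := by
      rw [← T_add, show Int.negSucc j + ((j:ℤ)+1) = 0 by rw [Int.negSucc_eq]; ring]
      exact T_zero
    have hT : (T ((j : ℤ)+1) : LaurentPolynomial ℤ) ≠ 0 := (isUnit_T _).ne_zero
    exact mul_right_cancel₀ hT (h1.trans h2.symm)

private lemma neg_tUnit_zpow (k : ℤ) :
    (((-tUnit) ^ k : Rˣ) : R) =
      Polynomial.C ((((-uT) ^ k : (LaurentPolynomial ℤ)ˣ)) : LaurentPolynomial ℤ) := by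
  have hmap : -tUnit = Units.map (Polynomial.C : LaurentPolynomial ℤ →+* R).toMonoidHom (-uT) := by
    ext
    simp [tUnit, uT]
  rw [hmap, ← MonoidHom.map_zpow]
  rfl

private lemma one_add_T_ne : (1 + T 1 : LaurentPolynomial ℤ) ≠ 0 := by
  have : (1 + T 1 : LaurentPolynomial ℤ) = Polynomial.toLaurent (1 + X) := by
    simp [Polynomial.toLaurent_X]
  rw [this, Ne, Polynomial.toLaurent_eq_zero]
  intro h
  have := congrArg (fun p => Polynomial.coeff p 0) h
  simp at this

private lemma p_eq : (1 - z - t * z : R) =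
    Polynomial.C (-(1 + T 1)) * X + Polynomial.C 1 := by
  simp only [z, t]
  ring_nf
  simp [map_add, map_neg]
  ring

private lemma natDegree_p : (1 - z - t * z : R).natDegree = 1 := by
  rw [p_eq]
  exact Polynomial.natDegree_linear (neg_ne_zero.mpr one_add_T_ne)

private lemma p_ne_zero : (1 - z - t * z : R) ≠ 0 := by
  intro h
  have := natDegree_p
  rw [h] at this
  simp at this

/-- faithfulness of the reduced bonded Burau representation of `M₂`.
Every element of `M₂` is determined by the exponent `k ∈ ℤ` of `σ₁` and the number
`m ∈ ℕ` of bond letters, and the representation sends it to `(-t)^k (1-z-tz)^m`;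
injectivity amounts to: if `(-t)^k (1-z-tz)^m = (-t)^{k'} (1-z-tz)^{m'}` in
`ℤ[t,t⁻¹,z]`, then `k = k'` and `m = m'`. -/
theorem reduced_bonded_burau_faithful_two_strands
    (k k' : ℤ) (m m' : ℕ)
    (h : ((((-tUnit) ^ k : Rˣ) : R)) * (1 - z - t * z) ^ m =
         ((((-tUnit) ^ k' : Rˣ) : R)) * (1 - z - t * z) ^ m') :
    k = k' ∧ m = m' := by
  set p : R := 1 - z - t * z with hp
  have hCk := neg_tUnit_zpow k
  have hCk' := neg_tUnit_zpow k'
  set w : LaurentPolynomial ℤ := (((-uT) ^ k : (LaurentPolynomial ℤ)ˣ) : LaurentPolynomial ℤ) with hw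
  set w' : LaurentPolynomial ℤ := (((-uT) ^ k' : (LaurentPolynomial ℤ)ˣ) : LaurentPolynomial ℤ) with hw'
  have hwne : w ≠ 0 := Units.ne_zero _
  have hwne' : w' ≠ 0 := Units.ne_zero _
  rw [hCk, hCk'] at h
  -- step 1: m = m'
  have hm : m = m' := by
    have hd := congrArg Polynomial.natDegree h
    rw [Polynomial.natDegree_mul (by simpa using hwne) (pow_ne_zero _ p_ne_zero),
        Polynomial.natDegree_mul (by simpa using hwne') (pow_ne_zero _ p_ne_zero),
        Polynomial.natDegree_pow, Polynomial.natDegree_pow,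
        Polynomial.natDegree_C, Polynomial.natDegree_C, natDegree_p] at hd
    simpa using hd
  subst hm
  refine ⟨?_, rfl⟩
  -- step 2: cancel and compare units
  have hC : (Polynomial.C w : R) = Polynomial.C w' :=
    mul_right_cancel₀ (pow_ne_zero _ p_ne_zero) h
  have hww : w = w' := Polynomial.C_injective hC
  have hu : (-uT) ^ k = (-uT) ^ k' := Units.ext hww
  have hsq : uT ^ (2 * k) = uT ^ (2 * k') := by
    have := congrArg (fun v => v ^ (2 : ℤ)) hu
    simp only [← zpow_mul] at this
    have hneg : ∀ j : ℤ, (-uT) ^ (j * 2) = uT ^ (2 * j) := by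
      intro j
      rw [mul_comm j 2, zpow_mul, zpow_mul]
      congr 1
      rw [zpow_two, zpow_two, neg_mul_neg]
    rw [hneg k, hneg k'] at this
    exact this
  have := congrArg (Units.val) hsq
  rw [uT_zpow_val, uT_zpow_val] at this
  have := T_inj this
  omega
end

section
/- The (n-1)×(n-1) reduced bonded Burau matrices satisfy the mixed relation A_i' A_{i+1}' B_i' = B_{i+1}' A_i' A_{i+1}' for 1 ≤ i ≤ n-2, where A_i', B_i' are defined as in the reduced bonded Burau representation. -/
/-! ### Auxiliary machinery for the mixed relation -/

/-- A matrix supported on a single column `c`. -/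
noncomputable def colM (m : ℕ) (c : Fin m) (u : Fin m → R) : Matrix (Fin m) (Fin m) R :=
  Matrix.of fun p q => if q = c then u p else 0

/-- The column function of `redA m i` minus the identity. -/
noncomputable def fA (m i : ℕ) (p : Fin m) : R :=
  if (p : ℕ) + 2 = i then t else if (p : ℕ) + 1 = i then -t - 1
  else if (p : ℕ) = i then 1 else 0

/-- The column function of `redB m i` minus the identity. -/
noncomputable def fB (m i : ℕ) (p : Fin m) : R :=
  if (p : ℕ) + 2 = i then t * z else if (p : ℕ) + 1 = i then -z - t * z
  else if (p : ℕ) = i then z else 0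

lemma colM_mul_colM (m : ℕ) (c c' : Fin m) (u v : Fin m → R) :
    colM m c u * colM m c' v = colM m c' (fun p => v c * u p) := by
  refine Matrix.ext fun p q => ?_
  simp only [colM, Matrix.mul_apply, Matrix.of_apply, ite_mul, mul_ite, zero_mul, mul_zero]
  by_cases h : q = c' <;> simp [h, Finset.sum_ite_eq', mul_comm]

lemma redA_decomp (m i : ℕ) (hi : 1 ≤ i) (c : Fin m) (hc : (c : ℕ) + 1 = i) :
    redA m i = 1 + colM m c (fA m i) := by
  refine Matrix.ext fun p q => ?_
  simp only [redA, colM, fA, Matrix.add_apply, Matrix.one_apply, Matrix.of_apply, Fin.ext_iff]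
  split_ifs <;> first | ring1 | (exfalso; omega)

lemma redB_decomp (m i : ℕ) (hi : 1 ≤ i) (c : Fin m) (hc : (c : ℕ) + 1 = i) :
    redB m i = 1 + colM m c (fB m i) := by
  refine Matrix.ext fun p q => ?_
  simp only [redB, colM, fB, Matrix.add_apply, Matrix.one_apply, Matrix.of_apply, Fin.ext_iff]
  split_ifs <;> first | ring1 | (exfalso; omega)

set_option maxHeartbeats 2000000 in
/-- the `(n-1) × (n-1)` reduced bonded Burau matrices satisfy the mixed
relation (M4): `A_i' A_{i+1}' B_i' = B_{i+1}' A_i' A_{i+1}'` for `1 ≤ i ≤ n-2`. -/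
theorem reduced_burau_mixed_M4 (n i : ℕ) (hn : 3 ≤ n) (hi1 : 1 ≤ i) (hi2 : i ≤ n - 2) :
    redA (n - 1) i * redA (n - 1) (i + 1) * redB (n - 1) i =
      redB (n - 1) (i + 1) * (redA (n - 1) i * redA (n - 1) (i + 1)) := by
  have hm1 : i - 1 < n - 1 := by omega
  have hm2 : i < n - 1 := by omega
  set a : Fin (n - 1) := ⟨i - 1, hm1⟩ with ha_def
  set b : Fin (n - 1) := ⟨i, hm2⟩ with hb_def
  have ha : (a : ℕ) + 1 = i := by simp [ha_def]; omega
  have hb : (b : ℕ) + 1 = i + 1 := by simp [hb_def]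
  rw [redA_decomp (n-1) i hi1 a ha, redA_decomp (n-1) (i+1) (by omega) b hb,
      redB_decomp (n-1) i hi1 a ha, redB_decomp (n-1) (i+1) (by omega) b hb]
  have eA0 : fA (n-1) i a = -t - 1 := by
    simp only [fA]; split_ifs <;> first | rfl | (exfalso; omega)
  have eA1 : fA (n-1) (i+1) a = t := by
    simp only [fA]; split_ifs <;> first | rfl | (exfalso; omega)
  have eA2 : fA (n-1) (i+1) b = -t - 1 := by
    simp only [fA]; split_ifs <;> first | rfl | (exfalso; omega)
  have eA3 : fA (n-1) i b = 1 := by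
    simp only [fA]; split_ifs <;> first | rfl | (exfalso; omega)
  have eB0 : fB (n-1) i a = -z - t * z := by
    simp only [fB]; split_ifs <;> first | rfl | (exfalso; omega)
  have eB1 : fB (n-1) (i+1) a = t * z := by
    simp only [fB]; split_ifs <;> first | rfl | (exfalso; omega)
  have eB2 : fB (n-1) (i+1) b = -z - t * z := by
    simp only [fB]; split_ifs <;> first | rfl | (exfalso; omega)
  have eB3 : fB (n-1) i b = z := by
    simp only [fB]; split_ifs <;> first | rfl | (exfalso; omega)
  simp only [add_mul, mul_add, one_mul, mul_one, colM_mul_colM,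
    eA0, eA1, eA2, eA3, eB0, eB1, eB2, eB3]
  refine Matrix.ext fun p q => ?_
  simp only [colM, fA, fB, Matrix.add_apply, Matrix.one_apply, Matrix.of_apply, Fin.ext_iff]
  split_ifs <;> first | ring1 | (exfalso; omega)
end

section
/- The (n-1)×(n-1) reduced bonded Burau matrices satisfy A_i' B_i' = B_i' A_i' for all 1 ≤ i ≤ n-1. -/

lemma redB_eq (m i : ℕ) :
    redB m i = (1 - z) • (1 : Matrix (Fin m) (Fin m) R) + z • redA m i := by
  refine Matrix.ext fun p q => ?_
  simp only [redA, redB, Matrix.of_apply, Matrix.add_apply, Matrix.smul_apply,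
    Matrix.one_apply, smul_eq_mul, Fin.ext_iff]
  split_ifs <;> try ring
  all_goals (exfalso; omega)

/-- the `(n-1) × (n-1)` reduced Burau and reduced bonded Burau matrices
commute: `A_i' B_i' = B_i' A_i'` for all `1 ≤ i ≤ n-1` (reduced relation (M2)). -/
theorem reduced_burau_mixed_M2 (n i : ℕ) (hn : 2 ≤ n) (hi1 : 1 ≤ i) (hi2 : i ≤ n - 1) :
    redA (n - 1) i * redB (n - 1) i = redB (n - 1) i * redA (n - 1) i := by
  rw [redB_eq]
  simp only [Matrix.mul_add, Matrix.add_mul, Matrix.mul_smul, Matrix.smul_mul,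
    Matrix.mul_one, Matrix.one_mul]
end

section
/- The n×n unreduced Burau matrices satisfy the braid relation A_i A_{i+1} A_i = A_{i+1} A_i A_{i+1} for 1 ≤ i ≤ n-2, and hence (together with A_i A_j = A_j A_i for |i-j| ≥ 2 and invertibility of each A_i) there is a well-defined monoid homomorphism from the bonded braid monoid M_n to GL_n(ℤ[t,t⁻¹,z]) sending σ_i ↦ A_i and b_i ↦ B_i. -/
/-- Generators of the bonded braid monoid `M_n`: `σ_i`, `σ_i⁻¹`, and bonds `b_i`. -/
inductive BGen : Type
  | s : ℕ → BGen
  | si : ℕ → BGen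
  | b : ℕ → BGen

open FreeMonoid in
/-- The defining relations (R1)–(R3), (B1), (M1)–(M4) of the bonded braid monoid `M_n`
(generator indices are 1-based, running over `1, …, n-1`). -/
inductive BRel (n : ℕ) : FreeMonoid BGen → FreeMonoid BGen → Prop
  | r1 (i : ℕ) (h1 : 1 ≤ i) (h2 : i ≤ n - 1) :
      BRel n (of (.s i) * of (.si i)) 1
  | r1' (i : ℕ) (h1 : 1 ≤ i) (h2 : i ≤ n - 1) :
      BRel n (of (.si i) * of (.s i)) 1
  | r2 (i j : ℕ) (h1 : 1 ≤ i) (h2 : i + 2 ≤ j) (h3 : j ≤ n - 1) :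
      BRel n (of (.s i) * of (.s j)) (of (.s j) * of (.s i))
  | r3 (i : ℕ) (h1 : 1 ≤ i) (h2 : i ≤ n - 2) :
      BRel n (of (.s i) * of (.s (i + 1)) * of (.s i))
        (of (.s (i + 1)) * of (.s i) * of (.s (i + 1)))
  | b1 (i j : ℕ) (h1 : 1 ≤ i) (h2 : i + 2 ≤ j) (h3 : j ≤ n - 1) :
      BRel n (of (.b i) * of (.b j)) (of (.b j) * of (.b i))
  | m1 (i j : ℕ) (hi1 : 1 ≤ i) (hi2 : i ≤ n - 1) (hj1 : 1 ≤ j) (hj2 : j ≤ n - 1)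
      (h : i + 2 ≤ j ∨ j + 2 ≤ i) :
      BRel n (of (.s i) * of (.b j)) (of (.b j) * of (.s i))
  | m2 (i : ℕ) (h1 : 1 ≤ i) (h2 : i ≤ n - 1) :
      BRel n (of (.s i) * of (.b i)) (of (.b i) * of (.s i))
  | m3 (i : ℕ) (h1 : 1 ≤ i) (h2 : i ≤ n - 2) :
      BRel n (of (.s (i + 1)) * of (.s i) * of (.b (i + 1)))
        (of (.b i) * of (.s (i + 1)) * of (.s i))
  | m4 (i : ℕ) (h1 : 1 ≤ i) (h2 : i ≤ n - 2) :
      BRel n (of (.s i) * of (.s (i + 1)) * of (.b i))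
        (of (.b (i + 1)) * of (.s i) * of (.s (i + 1)))

/-- The bonded braid monoid `M_n`, presented by the generators `BGen` and the
relations `BRel n`. -/
abbrev BondedBraidMonoid (n : ℕ) : Type := (conGen (BRel n)).Quotient

/-! Each generator matrix is the identity except for a `2 × 2` block on two adjacent coordinates,
and placing a square matrix on a set of coordinates of the identity (`Matrix.blockEmbed`) is
multiplicative, with placements on disjoint coordinates commuting. Hence far commutativity is
automatic, `A_i` is invertible because its block has determinant `-t`, and every relation
involving the indices `i` and `i + 1` is an identity between `3 × 3` matrices, checked entrywise.
The relations of `M_n` therefore hold for the matrices, and the homomorphism is induced from the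
free monoid on the generators. -/

open Function Matrix

namespace Matrix

theorem mul_one_submatrix_id {l m n α : Type*} [Fintype n] [DecidableEq n] [NonAssocSemiring α]
    (M : Matrix m n α) (e : l → n) : M * (1 : Matrix n n α).submatrix id e = M.submatrix id e := by
  ext r s
  simp [mul_apply, one_apply]

theorem one_submatrix_id_mul {l m n α : Type*} [Fintype n] [DecidableEq n] [NonAssocSemiring α]
    (M : Matrix n m α) (e : l → n) : (1 : Matrix n n α).submatrix e id * M = M.submatrix e id := by
  ext r s
  simp [mul_apply, one_apply]

theorem one_submatrix_id_mul_one_submatrix_id {l m n α : Type*} [Fintype n] [DecidableEq n]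
    [NonAssocSemiring α] (e : l → n) (f : m → n) :
    (1 : Matrix n n α).submatrix e id * (1 : Matrix n n α).submatrix id f =
      (1 : Matrix n n α).submatrix e f := by
  rw [one_submatrix_id_mul, submatrix_submatrix, comp_id, id_comp]

theorem one_submatrix_id_mul_one_submatrix_id_self {l n α : Type*} [Fintype n] [DecidableEq n]
    [DecidableEq l] [NonAssocSemiring α] {e : l → n} (he : Injective e) :
    (1 : Matrix n n α).submatrix e id * (1 : Matrix n n α).submatrix id e = 1 := by
  rw [one_submatrix_id_mul_one_submatrix_id, submatrix_one _ he]

variable {κ κ' ι S : Type*} [Fintype κ] [DecidableEq κ] [DecidableEq ι] [Ring S]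

/-- For injective `e`, the matrix acting as `M` on the coordinates `e κ` and as the identity on
the other coordinates: `1.submatrix id e` and `1.submatrix e id` are the inclusion of and the
projection onto these coordinates. -/
def blockEmbed (e : κ → ι) (M : Matrix κ κ S) : Matrix ι ι S :=
  1 + (1 : Matrix ι ι S).submatrix id e * (M - 1) * (1 : Matrix ι ι S).submatrix e id

theorem blockEmbed_one (e : κ → ι) : blockEmbed e (1 : Matrix κ κ S) = 1 := by
  simp [blockEmbed]

theorem blockEmbed_apply_of_left {e : κ → ι} (M : Matrix κ κ S) {p : ι} (hp : ∀ r, e r ≠ p)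
    (q : ι) : blockEmbed e M p q = (1 : Matrix ι ι S) p q := by
  simp [blockEmbed, mul_apply, one_apply, (hp _).symm]

theorem blockEmbed_apply_of_right {e : κ → ι} (M : Matrix κ κ S) (p : ι) {q : ι}
    (hq : ∀ s, e s ≠ q) : blockEmbed e M p q = (1 : Matrix ι ι S) p q := by
  simp [blockEmbed, mul_apply, one_apply, hq]

theorem blockEmbed_comp [Fintype κ'] [DecidableEq κ'] (e : κ' → ι) (f : κ → κ')
    (M : Matrix κ κ S) : blockEmbed e (blockEmbed f M) = blockEmbed (e ∘ f) M := by
  simp only [blockEmbed, add_sub_cancel_left, Matrix.mul_assoc, one_submatrix_id_mul,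
    submatrix_submatrix, comp_id]
  simp only [← Matrix.mul_assoc, mul_one_submatrix_id, submatrix_submatrix, comp_id]

variable [Fintype ι] {e : κ → ι}

theorem submatrix_blockEmbed (he : Injective e) (M : Matrix κ κ S) :
    (blockEmbed e M).submatrix e e = M := by
  have hsub : ∀ Y : Matrix ι ι S, Y.submatrix e e =
      (1 : Matrix ι ι S).submatrix e id * Y * (1 : Matrix ι ι S).submatrix id e := fun Y => by
    rw [one_submatrix_id_mul, mul_one_submatrix_id, submatrix_submatrix]; rfl
  have hRL := one_submatrix_id_mul_one_submatrix_id_self (α := S) he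
  simp only [hsub, blockEmbed, Matrix.mul_add, Matrix.add_mul, Matrix.mul_one, Matrix.mul_assoc,
    hRL]
  simp only [← Matrix.mul_assoc, hRL, Matrix.one_mul]
  abel

theorem blockEmbed_mul (he : Injective e) (M N : Matrix κ κ S) :
    blockEmbed e (M * N) = blockEmbed e M * blockEmbed e N := by
  have hRL := one_submatrix_id_mul_one_submatrix_id_self (α := S) he
  have key : M * N - 1 = (M - 1) + (N - 1) + (M - 1) * (N - 1) := by noncomm_ring
  simp only [blockEmbed, key, Matrix.add_mul, Matrix.mul_add, Matrix.mul_one, Matrix.one_mul,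
    Matrix.mul_assoc]
  rw [← Matrix.mul_assoc ((1 : Matrix ι ι S).submatrix e id), hRL, Matrix.one_mul]
  abel

def blockEmbedHom (he : Injective e) : Matrix κ κ S →* Matrix ι ι S where
  toFun := blockEmbed e
  map_one' := blockEmbed_one e
  map_mul' := blockEmbed_mul he

theorem commute_blockEmbed [Fintype κ'] [DecidableEq κ'] {f : κ' → ι} (hef : ∀ r s, e r ≠ f s)
    (M : Matrix κ κ S) (N : Matrix κ' κ' S) : Commute (blockEmbed e M) (blockEmbed f N) := by
  have hef' : (1 : Matrix ι ι S).submatrix e id * (1 : Matrix ι ι S).submatrix id f = 0 := by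
    rw [one_submatrix_id_mul_one_submatrix_id]; ext r s; simp [hef]
  have hfe' : (1 : Matrix ι ι S).submatrix f id * (1 : Matrix ι ι S).submatrix id e = 0 := by
    rw [one_submatrix_id_mul_one_submatrix_id]; ext r s; simp [(hef _ _).symm]
  simp only [Commute, SemiconjBy, blockEmbed, Matrix.add_mul, Matrix.mul_add, Matrix.mul_one,
    Matrix.one_mul, Matrix.mul_assoc]
  rw [← Matrix.mul_assoc ((1 : Matrix ι ι S).submatrix e id), hef',
    ← Matrix.mul_assoc ((1 : Matrix ι ι S).submatrix f id), hfe']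
  simp only [Matrix.zero_mul, Matrix.mul_zero, add_zero]
  abel

end Matrix

def consecutive {m n : ℕ} (k : ℕ) (h : k + m ≤ n) : Fin m → Fin n :=
  fun p => ⟨k + p, by omega⟩

theorem consecutive_injective {m n k : ℕ} (h : k + m ≤ n) : Injective (consecutive k h) :=
  fun p q hpq => Fin.ext (by simpa [consecutive] using hpq)

theorem consecutive_comp {l m n k j : ℕ} (h : k + m ≤ n) (h' : j + l ≤ m) :
    consecutive k h ∘ consecutive j h' = consecutive (k + j) (by omega) := by
  funext p
  simp [consecutive, add_assoc]

/-- `M` placed on the rows and columns `i - 1, i` (0-based) of the `n × n` identity, as in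
`burauA` and `burauB`. -/
def adjacentBlock {S : Type*} [Zero S] [One S] (n i : ℕ) (M : Matrix (Fin 2) (Fin 2) S) :
    Matrix (Fin n) (Fin n) S :=
  Matrix.of fun p q =>
    if (p : ℕ) + 1 = i ∧ (q : ℕ) + 1 = i then M 0 0
    else if (p : ℕ) + 1 = i ∧ (q : ℕ) = i then M 0 1
    else if (p : ℕ) = i ∧ (q : ℕ) + 1 = i then M 1 0
    else if (p : ℕ) = i ∧ (q : ℕ) = i then M 1 1
    else if p = q then 1 else 0

section AdjacentBlock

variable {S : Type*} [Ring S]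

theorem adjacentBlock_eq_blockEmbed {n k : ℕ} (h : k + 2 ≤ n) (M : Matrix (Fin 2) (Fin 2) S) :
    adjacentBlock n (k + 1) M = blockEmbed (consecutive k h) M := by
  ext p q
  by_cases hp : ∃ r, consecutive k h r = p
  · by_cases hq : ∃ s, consecutive k h s = q
    · obtain ⟨r, rfl⟩ := hp
      obtain ⟨s, rfl⟩ := hq
      rw [← submatrix_apply (blockEmbed _ M), submatrix_blockEmbed (consecutive_injective h)]
      fin_cases r <;> fin_cases s <;> simp [adjacentBlock, consecutive]
    · push Not at hq
      have := hq 0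
      have := hq 1
      rw [blockEmbed_apply_of_right M p hq]
      simp_all [adjacentBlock, consecutive, Fin.ext_iff, one_apply]
      split_ifs <;> first | rfl | omega
  · push Not at hp
    have := hp 0
    have := hp 1
    rw [blockEmbed_apply_of_left M hp]
    simp_all [adjacentBlock, consecutive, Fin.ext_iff, one_apply]
    split_ifs <;> first | rfl | omega

theorem adjacentBlock_eq_blockEmbed_adjacentBlock {m n k l : ℕ} (h : k + m ≤ n) (hl : l + 2 ≤ m)
    (M : Matrix (Fin 2) (Fin 2) S) :
    adjacentBlock n (k + l + 1) M = blockEmbed (consecutive k h) (adjacentBlock m (l + 1) M) := by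
  rw [adjacentBlock_eq_blockEmbed hl, blockEmbed_comp, consecutive_comp,
    adjacentBlock_eq_blockEmbed]

theorem exists_adjacentBlock_eq_blockEmbed_three {n i : ℕ} (h1 : 1 ≤ i) (h2 : i + 1 < n) :
    ∃ e : Fin 3 → Fin n, Injective e ∧ ∀ M : Matrix (Fin 2) (Fin 2) S,
      adjacentBlock n i M = blockEmbed e (adjacentBlock 3 1 M) ∧
      adjacentBlock n (i + 1) M = blockEmbed e (adjacentBlock 3 2 M) := by
  obtain ⟨k, rfl⟩ := Nat.exists_eq_add_of_le' h1
  have h : k + 3 ≤ n := by omega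
  exact ⟨consecutive k h, consecutive_injective h, fun M =>
    ⟨adjacentBlock_eq_blockEmbed_adjacentBlock (l := 0) h (by norm_num) M,
      adjacentBlock_eq_blockEmbed_adjacentBlock (l := 1) h le_rfl M⟩⟩

variable {n i : ℕ}

theorem adjacentBlock_mul (h1 : 1 ≤ i) (h2 : i < n) (M N : Matrix (Fin 2) (Fin 2) S) :
    adjacentBlock n i (M * N) = adjacentBlock n i M * adjacentBlock n i N := by
  obtain ⟨k, rfl⟩ := Nat.exists_eq_add_of_le' h1
  simp only [adjacentBlock_eq_blockEmbed (show k + 2 ≤ n by omega),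
    blockEmbed_mul (consecutive_injective _)]

theorem isUnit_adjacentBlock (h1 : 1 ≤ i) (h2 : i < n) {M : Matrix (Fin 2) (Fin 2) S}
    (hM : IsUnit M) : IsUnit (adjacentBlock n i M) := by
  obtain ⟨k, rfl⟩ := Nat.exists_eq_add_of_le' h1
  rw [adjacentBlock_eq_blockEmbed (show k + 2 ≤ n by omega)]
  exact hM.map (blockEmbedHom (consecutive_injective _))

theorem commute_adjacentBlock {j : ℕ} (h1 : 1 ≤ i) (hij : i + 2 ≤ j) (hj : j < n)
    (M N : Matrix (Fin 2) (Fin 2) S) : Commute (adjacentBlock n i M) (adjacentBlock n j N) := by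
  obtain ⟨k, rfl⟩ := Nat.exists_eq_add_of_le' h1
  obtain ⟨l, rfl⟩ := Nat.exists_eq_add_of_le' (show 1 ≤ j by omega)
  rw [adjacentBlock_eq_blockEmbed (show k + 2 ≤ n by omega),
    adjacentBlock_eq_blockEmbed (show l + 2 ≤ n by omega)]
  refine commute_blockEmbed (fun r s hrs => ?_) M N
  have := congrArg Fin.val hrs
  simp only [consecutive] at this
  omega

end AdjacentBlock

section BurauBlocks

variable {S : Type*} [CommRing S]

def burauBlock (t : S) : Matrix (Fin 2) (Fin 2) S := !![1 - t, t; 1, 0]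

def bondBlock (t z : S) : Matrix (Fin 2) (Fin 2) S := !![1 - t * z, t * z; z, 1 - z]

theorem isUnit_burauBlock {t : S} (ht : IsUnit t) : IsUnit (burauBlock t) := by
  rw [isUnit_iff_isUnit_det, burauBlock, det_fin_two_of]
  simpa using ht.neg

theorem commute_burauBlock_bondBlock (t z : S) : Commute (burauBlock t) (bondBlock t z) := by
  ext i j; fin_cases i <;> fin_cases j <;> simp [burauBlock, bondBlock] <;> ring

theorem adjacentBlock_three_one (a b c d : S) :
    adjacentBlock 3 1 !![a, b; c, d] = !![a, b, 0; c, d, 0; 0, 0, 1] := by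
  ext p q; fin_cases p <;> fin_cases q <;> rfl

theorem adjacentBlock_three_two (a b c d : S) :
    adjacentBlock 3 2 !![a, b; c, d] = !![1, 0, 0; 0, a, b; 0, c, d] := by
  ext p q; fin_cases p <;> fin_cases q <;> rfl

theorem burauBlock_three_braid (t : S) :
    adjacentBlock 3 1 (burauBlock t) * adjacentBlock 3 2 (burauBlock t) *
        adjacentBlock 3 1 (burauBlock t) =
      adjacentBlock 3 2 (burauBlock t) * adjacentBlock 3 1 (burauBlock t) *
        adjacentBlock 3 2 (burauBlock t) := by
  simp only [burauBlock, adjacentBlock_three_one, adjacentBlock_three_two]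
  ext i j; fin_cases i <;> fin_cases j <;> simp <;> ring

theorem burauBlock_three_bond_two (t z : S) :
    adjacentBlock 3 2 (burauBlock t) * adjacentBlock 3 1 (burauBlock t) *
        adjacentBlock 3 2 (bondBlock t z) =
      adjacentBlock 3 1 (bondBlock t z) * adjacentBlock 3 2 (burauBlock t) *
        adjacentBlock 3 1 (burauBlock t) := by
  simp only [burauBlock, bondBlock, adjacentBlock_three_one, adjacentBlock_three_two]
  ext i j; fin_cases i <;> fin_cases j <;> simp <;> ring

theorem burauBlock_three_bond_one (t z : S) :
    adjacentBlock 3 1 (burauBlock t) * adjacentBlock 3 2 (burauBlock t) *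
        adjacentBlock 3 1 (bondBlock t z) =
      adjacentBlock 3 2 (bondBlock t z) * adjacentBlock 3 1 (burauBlock t) *
        adjacentBlock 3 2 (burauBlock t) := by
  simp only [burauBlock, bondBlock, adjacentBlock_three_one, adjacentBlock_three_two]
  ext i j; fin_cases i <;> fin_cases j <;> simp <;> ring

end BurauBlocks

theorem burauA_eq_adjacentBlock (n i : ℕ) : burauA n i = adjacentBlock n i (burauBlock t) := rfl

theorem burauB_eq_adjacentBlock (n i : ℕ) : burauB n i = adjacentBlock n i (bondBlock t z) := rfl

theorem isUnit_t : IsUnit t := (LaurentPolynomial.isUnit_T 1).map Polynomial.C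

section BurauRelations

variable {n i : ℕ}

theorem isUnit_burauA (h1 : 1 ≤ i) (h2 : i < n) : IsUnit (burauA n i) :=
  isUnit_adjacentBlock h1 h2 (isUnit_burauBlock isUnit_t)

theorem commute_burauA_burauB (h1 : 1 ≤ i) (h2 : i < n) : Commute (burauA n i) (burauB n i) := by
  simp only [burauA_eq_adjacentBlock, burauB_eq_adjacentBlock, Commute, SemiconjBy,
    ← adjacentBlock_mul h1 h2, (commute_burauBlock_bondBlock t z).eq]

theorem burauA_braid (h1 : 1 ≤ i) (h2 : i + 1 < n) :
    burauA n i * burauA n (i + 1) * burauA n i =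
      burauA n (i + 1) * burauA n i * burauA n (i + 1) := by
  obtain ⟨e, he, hM⟩ := exists_adjacentBlock_eq_blockEmbed_three (S := R) h1 h2
  simp only [burauA_eq_adjacentBlock, hM, ← blockEmbed_mul he, burauBlock_three_braid]

theorem burauA_succ_mul_burauA_mul_burauB_succ (h1 : 1 ≤ i) (h2 : i + 1 < n) :
    burauA n (i + 1) * burauA n i * burauB n (i + 1) =
      burauB n i * burauA n (i + 1) * burauA n i := by
  obtain ⟨e, he, hM⟩ := exists_adjacentBlock_eq_blockEmbed_three (S := R) h1 h2
  simp only [burauA_eq_adjacentBlock, burauB_eq_adjacentBlock, hM, ← blockEmbed_mul he,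
    burauBlock_three_bond_two]

theorem burauA_mul_burauA_succ_mul_burauB (h1 : 1 ≤ i) (h2 : i + 1 < n) :
    burauA n i * burauA n (i + 1) * burauB n i =
      burauB n (i + 1) * burauA n i * burauA n (i + 1) := by
  obtain ⟨e, he, hM⟩ := exists_adjacentBlock_eq_blockEmbed_three (S := R) h1 h2
  simp only [burauA_eq_adjacentBlock, burauB_eq_adjacentBlock, hM, ← blockEmbed_mul he,
    burauBlock_three_bond_one]

end BurauRelations

noncomputable def bondedBurauGen (n : ℕ) : BGen → Matrix (Fin n) (Fin n) R
  | .s i => burauA n i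
  | .si i => (burauA n i)⁻¹
  | .b i => burauB n i

theorem bondedBurauGen_lift_eq_of_rel {n : ℕ} {x y : FreeMonoid BGen} (h : BRel n x y) :
    FreeMonoid.lift (bondedBurauGen n) x = FreeMonoid.lift (bondedBurauGen n) y := by
  cases h <;> simp only [map_mul, map_one, FreeMonoid.lift_eval_of, bondedBurauGen]
  case r1 i h1 h2 =>
    exact mul_nonsing_inv _ ((isUnit_iff_isUnit_det _).mp (isUnit_burauA h1 (by omega)))
  case r1' i h1 h2 =>
    exact nonsing_inv_mul _ ((isUnit_iff_isUnit_det _).mp (isUnit_burauA h1 (by omega)))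
  case r2 i j h1 h2 h3 =>
    simp only [burauA_eq_adjacentBlock]
    exact (commute_adjacentBlock h1 h2 (by omega) _ _).eq
  case r3 i h1 h2 => exact burauA_braid h1 (by omega)
  case b1 i j h1 h2 h3 =>
    simp only [burauB_eq_adjacentBlock]
    exact (commute_adjacentBlock h1 h2 (by omega) _ _).eq
  case m1 i j hi1 hi2 hj1 hj2 h =>
    simp only [burauA_eq_adjacentBlock, burauB_eq_adjacentBlock]
    rcases h with h | h
    · exact (commute_adjacentBlock hi1 h (by omega) _ _).eq
    · exact (commute_adjacentBlock hj1 h (by omega) _ _).eq.symm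
  case m2 i h1 h2 => exact (commute_burauA_burauB h1 (by omega)).eq
  case m3 i h1 h2 => exact burauA_succ_mul_burauA_mul_burauB_succ h1 (by omega)
  case m4 i h1 h2 => exact burauA_mul_burauA_succ_mul_burauB h1 (by omega)

noncomputable def bondedBurau (n : ℕ) : BondedBraidMonoid n →* Matrix (Fin n) (Fin n) R :=
  (conGen (BRel n)).lift (FreeMonoid.lift (bondedBurauGen n))
    (Con.conGen_le.mpr fun _ _ h => (Con.ker_rel _).mpr (bondedBurauGen_lift_eq_of_rel h))

theorem bonded_burau_representation_general (n : ℕ) :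
    (∀ i, 1 ≤ i → i ≤ n - 2 →
      burauA n i * burauA n (i + 1) * burauA n i =
        burauA n (i + 1) * (burauA n i * burauA n (i + 1))) ∧
    (∀ i j, 1 ≤ i → i + 2 ≤ j → j ≤ n - 1 →
      burauA n i * burauA n j = burauA n j * burauA n i) ∧
    (∀ i, 1 ≤ i → i ≤ n - 1 → IsUnit (burauA n i)) ∧
    ∃ φ : BondedBraidMonoid n →* Matrix (Fin n) (Fin n) R,
      ∀ i, 1 ≤ i → i ≤ n - 1 →
        φ (Con.mk' _ (FreeMonoid.of (BGen.s i))) = burauA n i ∧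
        φ (Con.mk' _ (FreeMonoid.of (BGen.b i))) = burauB n i := by
  refine ⟨fun i h1 h2 => ?_, fun i j h1 h2 h3 => ?_, fun i h1 h2 => isUnit_burauA h1 (by omega),
    bondedBurau n, fun i _ _ => ?_⟩
  · rw [← mul_assoc]
    exact burauA_braid h1 (by omega)
  · simp only [burauA_eq_adjacentBlock]
    exact (commute_adjacentBlock h1 h2 (by omega) _ _).eq
  · simp only [bondedBurau, Con.lift_mk', FreeMonoid.lift_eval_of, bondedBurauGen, and_self]

/-- the unreduced Burau matrices satisfy the braid relation
`A_i A_{i+1} A_i = A_{i+1} A_i A_{i+1}`, and (together with far commutativity and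
invertibility of each `A_i`) there is a well-defined monoid homomorphism
`M_n → GL_n(ℤ[t,t⁻¹,z])` sending `σ_i ↦ A_i` and `b_i ↦ B_i`. -/
theorem bonded_burau_representation (n : ℕ) (hn : 2 ≤ n) :
    (∀ i, 1 ≤ i → i ≤ n - 2 →
      burauA n i * burauA n (i + 1) * burauA n i =
        burauA n (i + 1) * (burauA n i * burauA n (i + 1))) ∧
    (∀ i j, 1 ≤ i → i + 2 ≤ j → j ≤ n - 1 →
      burauA n i * burauA n j = burauA n j * burauA n i) ∧
    (∀ i, 1 ≤ i → i ≤ n - 1 → IsUnit (burauA n i)) ∧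
    ∃ φ : BondedBraidMonoid n →* Matrix (Fin n) (Fin n) R,
      ∀ i, 1 ≤ i → i ≤ n - 1 →
        φ (Con.mk' _ (FreeMonoid.of (BGen.s i))) = burauA n i ∧
        φ (Con.mk' _ (FreeMonoid.of (BGen.b i))) = burauB n i :=
  bonded_burau_representation_general n
end

section
/- Let x, y, z, w be elements of the commutative ring ℤ[t,t⁻¹,z] and let B = [[x,y],[z,w]] and A = [[1-t,t],[1,0]]. If AB = BA, (considering 3×3 embeddings) A₂A₁B₂ = B₁A₂A₁ and A₁A₂B₁ = B₂A₁A₂ (where A₁,B₁ act on coordinates 1,2 and A₂,B₂ on coordinates 2,3 of 3×3 matrices), then x + y = 1, w + z = 1, y = tz, and x = 1 - tz; i.e., B = [[1-tz, tz],[z, 1-z]]. -/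
/-! Only the first column of `M3` and the first row of `M4` are needed: they give the four linear
relations `x + y = 1`, `c + w = 1`, `x + t c = 1`, `y + t w = t`, each multiplied by `1 - t`,
which can be cancelled since `1 - t` is a non-zero-divisor. -/

section BondRelations

variable {K : Type*} [CommRing K] {s x y c w : K}

theorem add_eq_one_of_M3 (hs : IsLeftRegular (1 - s))
    (hM3 : (!![1, 0, 0; 0, 1 - s, s; 0, 1, 0] : Matrix (Fin 3) (Fin 3) K) *
        !![1 - s, s, 0; 1, 0, 0; 0, 0, 1] * !![1, 0, 0; 0, x, y; 0, c, w] =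
        !![x, y, 0; c, w, 0; 0, 0, 1] *
        (!![1, 0, 0; 0, 1 - s, s; 0, 1, 0] * !![1 - s, s, 0; 1, 0, 0; 0, 0, 1])) :
    x + y = 1 ∧ c + w = 1 := by
  have h00 := congrFun (congrFun hM3 0) 0
  have h10 := congrFun (congrFun hM3 1) 0
  simp [Matrix.mul_apply, Fin.sum_univ_three] at h00 h10
  exact ⟨hs (by linear_combination -h00), hs (by linear_combination -h10)⟩

theorem add_mul_eq_of_M4 (hs : IsLeftRegular (1 - s))
    (hM4 : (!![1 - s, s, 0; 1, 0, 0; 0, 0, 1] : Matrix (Fin 3) (Fin 3) K) *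
        !![1, 0, 0; 0, 1 - s, s; 0, 1, 0] * !![x, y, 0; c, w, 0; 0, 0, 1] =
        !![1, 0, 0; 0, x, y; 0, c, w] *
        (!![1 - s, s, 0; 1, 0, 0; 0, 0, 1] * !![1, 0, 0; 0, 1 - s, s; 0, 1, 0])) :
    x + s * c = 1 ∧ y + s * w = s := by
  have g00 := congrFun (congrFun hM4 0) 0
  have g01 := congrFun (congrFun hM4 0) 1
  simp [Matrix.mul_apply, Fin.sum_univ_three] at g00 g01
  exact ⟨hs (by linear_combination g00), hs (by linear_combination g01)⟩

end BondRelations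

theorem t_ne_one : t ≠ 1 := by
  intro h
  simpa [t] using congrArg (fun p : R => (p.coeff 0).coeff 0) h

theorem isLeftRegular_one_sub_t : IsLeftRegular (1 - t) :=
  (IsRegular.of_ne_zero (sub_ne_zero.2 t_ne_one.symm)).left

theorem bond_matrix_characterization_general (x y c w : R)
    (hM3 : (!![1, 0, 0; 0, 1 - t, t; 0, 1, 0] : Matrix (Fin 3) (Fin 3) R) *
        !![1 - t, t, 0; 1, 0, 0; 0, 0, 1] * !![1, 0, 0; 0, x, y; 0, c, w] =
        !![x, y, 0; c, w, 0; 0, 0, 1] *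
        (!![1, 0, 0; 0, 1 - t, t; 0, 1, 0] * !![1 - t, t, 0; 1, 0, 0; 0, 0, 1]))
    (hM4 : (!![1 - t, t, 0; 1, 0, 0; 0, 0, 1] : Matrix (Fin 3) (Fin 3) R) *
        !![1, 0, 0; 0, 1 - t, t; 0, 1, 0] * !![x, y, 0; c, w, 0; 0, 0, 1] =
        !![1, 0, 0; 0, x, y; 0, c, w] *
        (!![1 - t, t, 0; 1, 0, 0; 0, 0, 1] * !![1, 0, 0; 0, 1 - t, t; 0, 1, 0])) :
    x + y = 1 ∧ w + c = 1 ∧ y = t * c ∧ x = 1 - t * c := by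
  obtain ⟨hxy, hcw⟩ := add_eq_one_of_M3 isLeftRegular_one_sub_t hM3
  obtain ⟨hxc, hyw⟩ := add_mul_eq_of_M4 isLeftRegular_one_sub_t hM4
  exact ⟨hxy, by linear_combination hcw, by linear_combination hyw - t * hcw,
    by linear_combination hxc⟩

/-- characterization of the bonded Burau matrix. If `B = [[x,y],[c,w]]`
commutes with the Burau block `A` ((M2)), and the 3×3 embeddings satisfy
`A₂A₁B₂ = B₁A₂A₁` ((M3)) and `A₁A₂B₁ = B₂A₁A₂` ((M4)), then
`x + y = 1`, `w + c = 1`, `y = t·c`, `x = 1 - t·c`, i.e. `B = [[1-tc, tc],[c, 1-c]]`. -/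
theorem bond_matrix_characterization (x y c w : R)
    (hM2 : !![1 - t, t; 1, 0] * !![x, y; c, w] = !![x, y; c, w] * !![1 - t, t; 1, 0])
    (hM3 : (!![1, 0, 0; 0, 1 - t, t; 0, 1, 0] : Matrix (Fin 3) (Fin 3) R) *
        !![1 - t, t, 0; 1, 0, 0; 0, 0, 1] * !![1, 0, 0; 0, x, y; 0, c, w] =
        !![x, y, 0; c, w, 0; 0, 0, 1] *
        (!![1, 0, 0; 0, 1 - t, t; 0, 1, 0] * !![1 - t, t, 0; 1, 0, 0; 0, 0, 1]))
    (hM4 : (!![1 - t, t, 0; 1, 0, 0; 0, 0, 1] : Matrix (Fin 3) (Fin 3) R) *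
        !![1, 0, 0; 0, 1 - t, t; 0, 1, 0] * !![x, y, 0; c, w, 0; 0, 0, 1] =
        !![1, 0, 0; 0, x, y; 0, c, w] *
        (!![1 - t, t, 0; 1, 0, 0; 0, 0, 1] * !![1, 0, 0; 0, 1 - t, t; 0, 1, 0])) :
    x + y = 1 ∧ w + c = 1 ∧ y = t * c ∧ x = 1 - t * c :=
  bond_matrix_characterization_general x y c w hM3 hM4
end
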